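/- arXiv:math/0606740 — 4 statements merged into one kernel-verified Lean document; each statement's English description precedes it below -/
import Mathlib

section
/- Let T > 0, t₀ ∈ (0,T), λ > 0 with t₀ − λ ≥ 0 and t₀ + λ ≤ T, and let X : [0,T] → GL(2,ℝ) be a continuous family of invertible 2×2 real matrices. Let k₁ ≥ 1 satisfy ‖X(t)‖ ≤ k₁ and ‖X(t)⁻¹‖ ≤ k₁ for all t ∈ [0,T], and let k₂ > 0 satisfy ‖X(t) − X(t₀)‖ ≤ k₂ and ‖X(t)⁻¹ − X(t₀)⁻¹‖ ≤ k₂ for all t with |t − t₀| ≤ λ. Let δ, Δ : ℝ → [0,∞) be continuous with support of δ contained in [t₀−λ, t₀], support of Δ contained in [t₀, t₀+λ], and ∫_ℝ δ = ∫_ℝ Δ = 1. Let ρ > 0 and let α : [0,T] → [0,1] be continuous with ∫₀ᵀ |α(t) − 1| dt ≤ ρ. Given a, b, c ∈ ℝ, set A = [[b, c],[a, −b]], A₁ = [[b, 0],[a, −b]], A₂ = [[0, c],[0, 0]], and define Z = X(T) · ∫₀ᵀ α(t) ( δ(t) · X(t)⁻¹ A₁ X(t) + Δ(t) · X(t)⁻¹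 A₂ X(t) ) dt. Then ‖Z‖ ≥ (1/k₁) · ( 1/k₁² − 2 k₁² (sup δ + sup Δ) ρ − 6 k₁ k₂ ) · ‖A‖. -/
/-!
The key quantitative lower bound of Lemma 4.5 (Franks' lemma for magnetic flows):
for `Z = X(T) ⬝ ∫₀ᵀ α(t)(δ(t) X(t)⁻¹A₁X(t) + Δ(t) X(t)⁻¹A₂X(t)) dt` one has
`‖Z‖ ≥ (1/k₁)(1/k₁² − 2k₁²(sup δ + sup Δ)ρ − 6k₁k₂)‖A‖`.
-/

open MeasureTheory Set

noncomputable section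

abbrev E2 := EuclideanSpace ℝ (Fin 2)

lemma franks_coord_le_norm (x : E2) (i : Fin 2) : |x i| ≤ ‖x‖ := by
  rw [EuclideanSpace.norm_eq, ← Real.sqrt_sq_eq_abs]
  apply Real.sqrt_le_sqrt
  calc (x i)^2 ≤ ∑ j, ‖x j‖^2 := by
        rw [Fin.sum_univ_two]; fin_cases i <;> simp [sq_abs] <;> positivity
  _ = _ := rfl

lemma franks_A2_norm_le (c : ℝ) :
    ‖Matrix.toEuclideanCLM (𝕜 := ℝ) !![(0:ℝ), c; 0, 0]‖ ≤ |c| := by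
  apply ContinuousLinearMap.opNorm_le_bound _ (abs_nonneg c)
  intro x
  have h : ∀ i, (Matrix.toEuclideanCLM (𝕜 := ℝ) !![(0:ℝ), c; 0, 0] x) i
      = (!![(0:ℝ), c; 0, 0]).mulVec x i := fun _ => rfl
  rw [EuclideanSpace.norm_eq, Fin.sum_univ_two, h 0, h 1]
  have h0 : (!![(0:ℝ), c; 0, 0]).mulVec x 0 = c * x 1 := by
    simp [Matrix.mulVec, dotProduct, Fin.sum_univ_two]
  have h1 : (!![(0:ℝ), c; 0, 0]).mulVec x 1 = 0 := by
    simp [Matrix.mulVec, dotProduct, Fin.sum_univ_two]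
  rw [h0, h1]
  have : √(‖c * x 1‖^2 + ‖(0:ℝ)‖^2) = |c| * |x 1| := by
    simp [Real.norm_eq_abs, abs_mul]
    exact Real.sqrt_sq (by positivity)
  rw [this]
  exact mul_le_mul_of_nonneg_left (franks_coord_le_norm x 1) (abs_nonneg c)

lemma franks_c_le_A_norm (a b c : ℝ) :
    |c| ≤ ‖Matrix.toEuclideanCLM (𝕜 := ℝ) !![b, c; a, -b]‖ := by
  set A := Matrix.toEuclideanCLM (𝕜 := ℝ) !![b, c; a, -b]
  have he : ‖(EuclideanSpace.single 1 1 : E2)‖ = 1 := by simp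
  have key : ∀ y : E2, (A y) 0 = b * y 0 + c * y 1 := by
    intro y
    show (!![b, c; a, -b]).mulVec y 0 = _
    simp [Matrix.mulVec, dotProduct, Fin.sum_univ_two]
  have h0 : (A (EuclideanSpace.single 1 1)) 0 = c := by
    rw [key]; simp [EuclideanSpace.single_apply]
  calc |c| = |(A (EuclideanSpace.single 1 1)) 0| := by rw [h0]
    _ ≤ ‖A (EuclideanSpace.single 1 1)‖ := franks_coord_le_norm _ 0
    _ ≤ ‖A‖ * ‖(EuclideanSpace.single 1 1 : E2)‖ := A.le_opNorm _
    _ = ‖A‖ := by rw [he, mul_one]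

lemma franks_comp3 (u v w : E2 →L[ℝ] E2) : ‖u.comp (v.comp w)‖ ≤ ‖u‖ * ‖v‖ * ‖w‖ := by
  calc ‖u.comp (v.comp w)‖ ≤ ‖u‖ * ‖v.comp w‖ := ContinuousLinearMap.opNorm_comp_le _ _
  _ ≤ ‖u‖ * (‖v‖ * ‖w‖) :=
      mul_le_mul_of_nonneg_left (ContinuousLinearMap.opNorm_comp_le _ _) (norm_nonneg u)
  _ = ‖u‖ * ‖v‖ * ‖w‖ := (mul_assoc _ _ _).symm

lemma franks_mul3 {x y z X Y Z : ℝ} (hx : 0 ≤ x) (hy : 0 ≤ y) (hz : 0 ≤ z)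
    (h1 : x ≤ X) (h2 : y ≤ Y) (h3 : z ≤ Z) : x * y * z ≤ X * Y * Z :=
  mul_le_mul (mul_le_mul h1 h2 hy (le_trans hx h1)) h3 hz
    (mul_nonneg (le_trans hx h1) (le_trans hy h2))

lemma franks_norm_smul_nonneg (r : ℝ) (hr : 0 ≤ r) (f : E2 →L[ℝ] E2) :
    ‖r • f‖ = r * ‖f‖ := by
  have := norm_smul r f
  rwa [Real.norm_eq_abs, abs_of_nonneg hr] at this

set_option maxHeartbeats 1000000 in
theorem franks_aux
    (T t₀ lam : ℝ) (hT : 0 < T) (ht₀ : t₀ ∈ Set.Ioo 0 T) (hlam : 0 < lam)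
    (hlam0 : 0 ≤ t₀ - lam) (hlamT : t₀ + lam ≤ T)
    (Xf Yf : ℝ → (E2 →L[ℝ] E2))
    (hXcont : ContinuousOn Xf (Set.Icc 0 T)) (hYcont : ContinuousOn Yf (Set.Icc 0 T))
    (k₁ : ℝ) (hk₁ : 1 ≤ k₁)
    (hXnorm : ∀ t ∈ Set.Icc (0 : ℝ) T, ‖Xf t‖ ≤ k₁)
    (hYnorm : ∀ t ∈ Set.Icc (0 : ℝ) T, ‖Yf t‖ ≤ k₁)
    (k₂ : ℝ) (hk₂ : 0 < k₂)
    (hosc : ∀ t : ℝ, |t - t₀| ≤ lam → ‖Xf t - Xf t₀‖ ≤ k₂)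
    (hosci : ∀ t : ℝ, |t - t₀| ≤ lam → ‖Yf t - Yf t₀‖ ≤ k₂)
    (hidT : (Yf T).comp (Xf T) = ContinuousLinearMap.id ℝ E2)
    (hid0 : (Xf t₀).comp (Yf t₀) = ContinuousLinearMap.id ℝ E2)
    (δ Δ : ℝ → ℝ) (hδc : Continuous δ) (hΔc : Continuous Δ)
    (hδ0 : ∀ t, 0 ≤ δ t) (hΔ0 : ∀ t, 0 ≤ Δ t)
    (hδsupp : Function.support δ ⊆ Set.Icc (t₀ - lam) t₀)
    (hΔsupp : Function.support Δ ⊆ Set.Icc t₀ (t₀ + lam))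
    (hδint : (∫ t : ℝ, δ t) = 1) (hΔint : (∫ t : ℝ, Δ t) = 1)
    (ρ : ℝ) (hρ : 0 < ρ)
    (α : ℝ → ℝ) (hαc : ContinuousOn α (Set.Icc 0 T))
    (hαint : (∫ t in (0 : ℝ)..T, |α t - 1|) ≤ ρ)
    (A A₁ A₂ : E2 →L[ℝ] E2)
    (hA12 : A₁ + A₂ = A) (hA1n : ‖A₁‖ ≤ 2 * ‖A‖) (hA2n : ‖A₂‖ ≤ ‖A‖)
    (Z : E2 →L[ℝ] E2)
    (hZ : Z = (Xf T).comp
      (∫ t in (0 : ℝ)..T,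
        α t • (δ t • ((Yf t).comp (A₁.comp (Xf t))) +
            Δ t • ((Yf t).comp (A₂.comp (Xf t)))))) :
    (1 / k₁) * (1 / k₁ ^ 2 - 2 * k₁ ^ 2 * ((⨆ t : ℝ, δ t) + (⨆ t : ℝ, Δ t)) * ρ -
        6 * k₁ * k₂) * ‖A‖ ≤ ‖Z‖ := by
  have hk0 : (0:ℝ) < k₁ := lt_of_lt_of_le one_pos hk₁
  have hAnn : (0:ℝ) ≤ ‖A‖ := norm_nonneg A
  have ht₀mem : t₀ ∈ Set.Icc (0:ℝ) T := ⟨ht₀.1.le, ht₀.2.le⟩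
  have hTmem : T ∈ Set.Icc (0:ℝ) T := ⟨hT.le, le_refl T⟩
  -- sups
  have hδcs : HasCompactSupport δ :=
    HasCompactSupport.intro isCompact_Icc (fun x hx => by
      by_contra h; exact hx (hδsupp (Function.mem_support.2 h)))
  have hΔcs : HasCompactSupport Δ :=
    HasCompactSupport.intro isCompact_Icc (fun x hx => by
      by_contra h; exact hx (hΔsupp (Function.mem_support.2 h)))
  have hδbdd : BddAbove (Set.range δ) := hδc.bddAbove_range_of_hasCompactSupport hδcs
  have hΔbdd : BddAbove (Set.range Δ) := hΔc.bddAbove_range_of_hasCompactSupport hΔcs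
  set Sd := ⨆ t : ℝ, δ t with hSd
  set SD := ⨆ t : ℝ, Δ t with hSD
  have hδsup : ∀ t, δ t ≤ Sd := fun t => le_ciSup hδbdd t
  have hΔsup : ∀ t, Δ t ≤ SD := fun t => le_ciSup hΔbdd t
  have hSd0 : 0 ≤ Sd := le_trans (hδ0 t₀) (hδsup t₀)
  have hSD0 : 0 ≤ SD := le_trans (hΔ0 t₀) (hΔsup t₀)
  -- support facts
  have hsubδ : Set.Icc (t₀ - lam) t₀ ⊆ Set.Icc (0:ℝ) T := Set.Icc_subset_Icc hlam0 ht₀.2.le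
  have hsubΔ : Set.Icc t₀ (t₀ + lam) ⊆ Set.Icc (0:ℝ) T := Set.Icc_subset_Icc ht₀.1.le hlamT
  have hδ_out : ∀ t ∉ Set.Icc (0:ℝ) T, δ t = 0 := by
    intro t ht; by_contra h
    exact ht (hsubδ (hδsupp (Function.mem_support.2 h)))
  have hΔ_out : ∀ t ∉ Set.Icc (0:ℝ) T, Δ t = 0 := by
    intro t ht; by_contra h
    exact ht (hsubΔ (hΔsupp (Function.mem_support.2 h)))
  have hδT : (∫ t in (0:ℝ)..T, δ t) = 1 := by
    rw [intervalIntegral.integral_of_le hT.le, ← MeasureTheory.integral_Icc_eq_integral_Ioc,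
      MeasureTheory.setIntegral_eq_integral_of_forall_compl_eq_zero hδ_out, hδint]
  have hΔT : (∫ t in (0:ℝ)..T, Δ t) = 1 := by
    rw [intervalIntegral.integral_of_le hT.le, ← MeasureTheory.integral_Icc_eq_integral_Ioc,
      MeasureTheory.setIntegral_eq_integral_of_forall_compl_eq_zero hΔ_out, hΔint]
  -- the basic maps
  set P : ℝ → (E2 →L[ℝ] E2) := fun t => (Yf t).comp (A₁.comp (Xf t)) with hP
  set Q : ℝ → (E2 →L[ℝ] E2) := fun t => (Yf t).comp (A₂.comp (Xf t)) with hQ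
  set G : ℝ → (E2 →L[ℝ] E2) := fun t => δ t • P t + Δ t • Q t with hG
  set F : ℝ → (E2 →L[ℝ] E2) := fun t => α t • G t with hF
  set H : ℝ → (E2 →L[ℝ] E2) := fun t => δ t • P t₀ + Δ t • Q t₀ with hH
  have hZ' : Z = (Xf T).comp (∫ t in (0:ℝ)..T, F t) := by
    simp only [hF, hG, hP, hQ]; exact hZ
  -- continuity
  have hPc : ContinuousOn P (Set.Icc 0 T) :=
    hYcont.clm_comp (continuousOn_const.clm_comp hXcont)
  have hQc : ContinuousOn Q (Set.Icc 0 T) :=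
    hYcont.clm_comp (continuousOn_const.clm_comp hXcont)
  have hGc : ContinuousOn G (Set.Icc 0 T) :=
    (hδc.continuousOn.smul hPc).add (hΔc.continuousOn.smul hQc)
  have hFc : ContinuousOn F (Set.Icc 0 T) := hαc.smul hGc
  have hHc : Continuous H := (hδc.smul continuous_const).add (hΔc.smul continuous_const)
  have huT : Set.Icc (0:ℝ) T = Set.uIcc (0:ℝ) T := (Set.uIcc_of_le hT.le).symm
  have hFi : IntervalIntegrable F volume 0 T := (huT ▸ hFc).intervalIntegrable
  have hGi : IntervalIntegrable G volume 0 T := (huT ▸ hGc).intervalIntegrable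
  have hHi : IntervalIntegrable H volume 0 T := hHc.intervalIntegrable _ _
  -- norm bounds on P Q
  have hPn : ∀ t ∈ Set.Icc (0:ℝ) T, ‖P t‖ ≤ k₁ * (2 * ‖A‖) * k₁ := by
    intro t ht
    exact le_trans (franks_comp3 _ _ _)
      (franks_mul3 (norm_nonneg _) (norm_nonneg _) (norm_nonneg _) (hYnorm t ht) hA1n
        (hXnorm t ht))
  have hQn : ∀ t ∈ Set.Icc (0:ℝ) T, ‖Q t‖ ≤ k₁ * ‖A‖ * k₁ := by
    intro t ht
    exact le_trans (franks_comp3 _ _ _)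
      (franks_mul3 (norm_nonneg _) (norm_nonneg _) (norm_nonneg _) (hYnorm t ht) hA2n
        (hXnorm t ht))
  -- Step A : ‖∫F‖ ≤ k₁ ‖Z‖
  have hidTpt : ∀ x : E2, (Yf T) ((Xf T) x) = x := fun x => by
    simpa using DFunLike.congr_fun hidT x
  have hIeq : (∫ t in (0:ℝ)..T, F t) = (Yf T).comp Z := by
    rw [hZ']
    ext x
    simp [ContinuousLinearMap.comp_apply, hidTpt]
  have hInormZ : ‖∫ t in (0:ℝ)..T, F t‖ ≤ k₁ * ‖Z‖ := by
    rw [hIeq]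
    exact le_trans (ContinuousLinearMap.opNorm_comp_le _ _)
      (mul_le_mul_of_nonneg_right (hYnorm T hTmem) (norm_nonneg Z))
  -- Step B : ‖∫F - ∫G‖ ≤ 2 k₁² (Sd+SD) ‖A‖ ρ
  set B1 : ℝ := 2 * k₁^2 * (Sd + SD) * ‖A‖ with hB1
  have hB1nn : 0 ≤ B1 := by positivity
  have hGnorm : ∀ t ∈ Set.Icc (0:ℝ) T, ‖G t‖ ≤ B1 := by
    intro t ht
    have h1 : ‖δ t • P t‖ ≤ δ t * (k₁ * (2 * ‖A‖) * k₁) := by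
      rw [franks_norm_smul_nonneg _ (hδ0 t)]
      exact mul_le_mul_of_nonneg_left (hPn t ht) (hδ0 t)
    have h2 : ‖Δ t • Q t‖ ≤ Δ t * (k₁ * ‖A‖ * k₁) := by
      rw [franks_norm_smul_nonneg _ (hΔ0 t)]
      exact mul_le_mul_of_nonneg_left (hQn t ht) (hΔ0 t)
    have h3 := hδsup t
    have h4 := hΔsup t
    have h5 : δ t * (k₁ * (2 * ‖A‖) * k₁) ≤ Sd * (k₁ * (2 * ‖A‖) * k₁) :=
      mul_le_mul_of_nonneg_right h3 (by positivity)
    have h6 : Δ t * (k₁ * ‖A‖ * k₁) ≤ SD * (k₁ * ‖A‖ * k₁) :=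
      mul_le_mul_of_nonneg_right h4 (by positivity)
    have h7 : 0 ≤ SD * (k₁ * ‖A‖ * k₁) := by positivity
    calc ‖G t‖ ≤ ‖δ t • P t‖ + ‖Δ t • Q t‖ := norm_add_le _ _
    _ ≤ B1 := by rw [hB1]; nlinarith
  have hFGpt : ∀ t ∈ Set.Icc (0:ℝ) T, ‖F t - G t‖ ≤ |α t - 1| * B1 := by
    intro t ht
    have he : F t - G t = (α t - 1) • G t := by
      simp only [hF]
      module
    have hns : ‖(α t - 1) • G t‖ = |α t - 1| * ‖G t‖ := by
      have := norm_smul (α t - 1) (G t)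
      rwa [Real.norm_eq_abs] at this
    rw [he, hns]
    exact mul_le_mul_of_nonneg_left (hGnorm t ht) (abs_nonneg _)
  have hFGnormc : ContinuousOn (fun t => ‖F t - G t‖) (Set.Icc 0 T) := (hFc.sub hGc).norm
  have hαBc : ContinuousOn (fun t => |α t - 1| * B1) (Set.Icc 0 T) :=
    ((hαc.sub continuousOn_const).abs).mul continuousOn_const
  have hEB : ‖(∫ t in (0:ℝ)..T, F t) - ∫ t in (0:ℝ)..T, G t‖ ≤ B1 * ρ := by
    rw [← intervalIntegral.integral_sub hFi hGi]
    calc ‖∫ t in (0:ℝ)..T, (F t - G t)‖ ≤ ∫ t in (0:ℝ)..T, ‖F t - G t‖ :=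
          intervalIntegral.norm_integral_le_integral_norm hT.le
    _ ≤ ∫ t in (0:ℝ)..T, |α t - 1| * B1 := by
        apply intervalIntegral.integral_mono_on hT.le
          (huT ▸ hFGnormc).intervalIntegrable (huT ▸ hαBc).intervalIntegrable hFGpt
    _ = (∫ t in (0:ℝ)..T, |α t - 1|) * B1 := intervalIntegral.integral_mul_const _ _
    _ ≤ ρ * B1 := mul_le_mul_of_nonneg_right hαint hB1nn
    _ = B1 * ρ := mul_comm _ _
  -- Step C : ‖∫G - ∫H‖ ≤ 6 k₁ k₂ ‖A‖
  have hP0n : ∀ t, |t - t₀| ≤ lam → t ∈ Set.Icc (0:ℝ) T →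
      ‖P t - P t₀‖ ≤ 2 * k₁ * k₂ * (2 * ‖A‖) := by
    intro t habs ht
    have he : P t - P t₀ =
        (Yf t - Yf t₀).comp (A₁.comp (Xf t)) + (Yf t₀).comp (A₁.comp (Xf t - Xf t₀)) := by
      simp only [hP, ContinuousLinearMap.sub_comp, ContinuousLinearMap.comp_sub]
      abel
    rw [he]
    have b1 : ‖(Yf t - Yf t₀).comp (A₁.comp (Xf t))‖ ≤ k₂ * (2 * ‖A‖) * k₁ := by
      exact le_trans (franks_comp3 _ _ _)
        (franks_mul3 (norm_nonneg _) (norm_nonneg _) (norm_nonneg _) (hosci t habs) hA1n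
          (hXnorm t ht))
    have b2 : ‖(Yf t₀).comp (A₁.comp (Xf t - Xf t₀))‖ ≤ k₁ * (2 * ‖A‖) * k₂ := by
      exact le_trans (franks_comp3 _ _ _)
        (franks_mul3 (norm_nonneg _) (norm_nonneg _) (norm_nonneg _) (hYnorm t₀ ht₀mem) hA1n
          (hosc t habs))
    calc ‖_ + _‖ ≤ ‖(Yf t - Yf t₀).comp (A₁.comp (Xf t))‖ +
          ‖(Yf t₀).comp (A₁.comp (Xf t - Xf t₀))‖ := norm_add_le _ _
    _ ≤ 2 * k₁ * k₂ * (2 * ‖A‖) := by nlinarith [b1, b2]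
  have hQ0n : ∀ t, |t - t₀| ≤ lam → t ∈ Set.Icc (0:ℝ) T →
      ‖Q t - Q t₀‖ ≤ 2 * k₁ * k₂ * ‖A‖ := by
    intro t habs ht
    have he : Q t - Q t₀ =
        (Yf t - Yf t₀).comp (A₂.comp (Xf t)) + (Yf t₀).comp (A₂.comp (Xf t - Xf t₀)) := by
      simp only [hQ, ContinuousLinearMap.sub_comp, ContinuousLinearMap.comp_sub]
      abel
    rw [he]
    have b1 : ‖(Yf t - Yf t₀).comp (A₂.comp (Xf t))‖ ≤ k₂ * ‖A‖ * k₁ := by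
      exact le_trans (franks_comp3 _ _ _)
        (franks_mul3 (norm_nonneg _) (norm_nonneg _) (norm_nonneg _) (hosci t habs) hA2n
          (hXnorm t ht))
    have b2 : ‖(Yf t₀).comp (A₂.comp (Xf t - Xf t₀))‖ ≤ k₁ * ‖A‖ * k₂ := by
      exact le_trans (franks_comp3 _ _ _)
        (franks_mul3 (norm_nonneg _) (norm_nonneg _) (norm_nonneg _) (hYnorm t₀ ht₀mem) hA2n
          (hosc t habs))
    calc ‖_ + _‖ ≤ ‖(Yf t - Yf t₀).comp (A₂.comp (Xf t))‖ +
          ‖(Yf t₀).comp (A₂.comp (Xf t - Xf t₀))‖ := norm_add_le _ _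
    _ ≤ 2 * k₁ * k₂ * ‖A‖ := by nlinarith [b1, b2]
  have hGHpt : ∀ t ∈ Set.Icc (0:ℝ) T,
      ‖G t - H t‖ ≤ δ t * (2 * k₁ * k₂ * (2 * ‖A‖)) + Δ t * (2 * k₁ * k₂ * ‖A‖) := by
    intro t ht
    have he : G t - H t = δ t • (P t - P t₀) + Δ t • (Q t - Q t₀) := by
      simp only [hG, hH]
      module
    have b1 : ‖δ t • (P t - P t₀)‖ ≤ δ t * (2 * k₁ * k₂ * (2 * ‖A‖)) := by
      rcases eq_or_ne (δ t) 0 with h | h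
      · rw [franks_norm_smul_nonneg _ (hδ0 t), h]; simp
      · have hts : t ∈ Set.Icc (t₀ - lam) t₀ := hδsupp (Function.mem_support.2 h)
        have habs : |t - t₀| ≤ lam := abs_le.2 ⟨by linarith [hts.1], by linarith [hts.2, hlam.le]⟩
        rw [franks_norm_smul_nonneg _ (hδ0 t)]
        exact mul_le_mul_of_nonneg_left (hP0n t habs ht) (hδ0 t)
    have b2 : ‖Δ t • (Q t - Q t₀)‖ ≤ Δ t * (2 * k₁ * k₂ * ‖A‖) := by
      rcases eq_or_ne (Δ t) 0 with h | h
      · rw [franks_norm_smul_nonneg _ (hΔ0 t), h]; simp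
      · have hts : t ∈ Set.Icc t₀ (t₀ + lam) := hΔsupp (Function.mem_support.2 h)
        have habs : |t - t₀| ≤ lam := abs_le.2 ⟨by linarith [hts.1, hlam.le], by linarith [hts.2]⟩
        rw [franks_norm_smul_nonneg _ (hΔ0 t)]
        exact mul_le_mul_of_nonneg_left (hQ0n t habs ht) (hΔ0 t)
    calc ‖G t - H t‖ = ‖δ t • (P t - P t₀) + Δ t • (Q t - Q t₀)‖ := by rw [he]
    _ ≤ ‖δ t • (P t - P t₀)‖ + ‖Δ t • (Q t - Q t₀)‖ := norm_add_le _ _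
    _ ≤ _ := add_le_add b1 b2
  have hGHnormc : ContinuousOn (fun t => ‖G t - H t‖) (Set.Icc 0 T) :=
    (hGc.sub hHc.continuousOn).norm
  have hrhsc : Continuous (fun t => δ t * (2 * k₁ * k₂ * (2 * ‖A‖)) + Δ t * (2 * k₁ * k₂ * ‖A‖)) :=
    (hδc.mul continuous_const).add (hΔc.mul continuous_const)
  have hEC : ‖(∫ t in (0:ℝ)..T, G t) - ∫ t in (0:ℝ)..T, H t‖ ≤ 6 * k₁ * k₂ * ‖A‖ := by
    rw [← intervalIntegral.integral_sub hGi hHi]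
    calc ‖∫ t in (0:ℝ)..T, (G t - H t)‖ ≤ ∫ t in (0:ℝ)..T, ‖G t - H t‖ :=
          intervalIntegral.norm_integral_le_integral_norm hT.le
    _ ≤ ∫ t in (0:ℝ)..T, (δ t * (2 * k₁ * k₂ * (2 * ‖A‖)) + Δ t * (2 * k₁ * k₂ * ‖A‖)) := by
        apply intervalIntegral.integral_mono_on hT.le
          (huT ▸ hGHnormc).intervalIntegrable (hrhsc.intervalIntegrable _ _) hGHpt
    _ = (∫ t in (0:ℝ)..T, δ t * (2 * k₁ * k₂ * (2 * ‖A‖))) +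
          ∫ t in (0:ℝ)..T, Δ t * (2 * k₁ * k₂ * ‖A‖) := by
        apply intervalIntegral.integral_add
          ((hδc.mul continuous_const).intervalIntegrable _ _)
          ((hΔc.mul continuous_const).intervalIntegrable _ _)
    _ = (∫ t in (0:ℝ)..T, δ t) * (2 * k₁ * k₂ * (2 * ‖A‖)) +
          (∫ t in (0:ℝ)..T, Δ t) * (2 * k₁ * k₂ * ‖A‖) := by
        rw [intervalIntegral.integral_mul_const, intervalIntegral.integral_mul_const]
    _ = 6 * k₁ * k₂ * ‖A‖ := by rw [hδT, hΔT]; ring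
  -- Step D : ∫H = Y₀ A X₀
  have hIH : (∫ t in (0:ℝ)..T, H t) = (Yf t₀).comp (A.comp (Xf t₀)) := by
    have e1 : (∫ t in (0:ℝ)..T, H t) =
        (∫ t in (0:ℝ)..T, δ t • P t₀) + ∫ t in (0:ℝ)..T, Δ t • Q t₀ := by
      apply intervalIntegral.integral_add
        ((hδc.smul continuous_const).intervalIntegrable _ _)
        ((hΔc.smul continuous_const).intervalIntegrable _ _)
    rw [e1, intervalIntegral.integral_smul_const, intervalIntegral.integral_smul_const,
      hδT, hΔT, one_smul, one_smul]
    simp only [hP, hQ]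
    rw [← ContinuousLinearMap.comp_add, ← ContinuousLinearMap.add_comp, hA12]
  -- Step E : ‖A‖ ≤ k₁² ‖∫H‖
  have hid0pt : ∀ x : E2, (Xf t₀) ((Yf t₀) x) = x := fun x => by
    simpa using DFunLike.congr_fun hid0 x
  have hAeq : A = (Xf t₀).comp (((Yf t₀).comp (A.comp (Xf t₀))).comp (Yf t₀)) := by
    ext x
    simp [ContinuousLinearMap.comp_apply, hid0pt]
  have hAle : ‖A‖ ≤ k₁ * ‖∫ t in (0:ℝ)..T, H t‖ * k₁ := by
    rw [hIH]
    calc ‖A‖ = ‖(Xf t₀).comp (((Yf t₀).comp (A.comp (Xf t₀))).comp (Yf t₀))‖ := by rw [← hAeq]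
    _ ≤ ‖Xf t₀‖ * ‖(Yf t₀).comp (A.comp (Xf t₀))‖ * ‖Yf t₀‖ := franks_comp3 _ _ _
    _ ≤ k₁ * ‖(Yf t₀).comp (A.comp (Xf t₀))‖ * k₁ :=
        franks_mul3 (norm_nonneg _) (norm_nonneg _) (norm_nonneg _) (hXnorm t₀ ht₀mem)
          (le_refl _) (hYnorm t₀ ht₀mem)
  -- combine
  have tri : ‖∫ t in (0:ℝ)..T, H t‖ ≤ ‖∫ t in (0:ℝ)..T, F t‖ +
      ‖(∫ t in (0:ℝ)..T, F t) - ∫ t in (0:ℝ)..T, G t‖ +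
      ‖(∫ t in (0:ℝ)..T, G t) - ∫ t in (0:ℝ)..T, H t‖ := by
    have e : (∫ t in (0:ℝ)..T, H t) = (∫ t in (0:ℝ)..T, F t) -
        ((∫ t in (0:ℝ)..T, F t) - ∫ t in (0:ℝ)..T, G t) -
        ((∫ t in (0:ℝ)..T, G t) - ∫ t in (0:ℝ)..T, H t) := by abel
    conv_lhs => rw [e]
    exact le_trans (norm_sub_le _ _) (add_le_add (norm_sub_le _ _) (le_refl _))
  have hIHle : ‖∫ t in (0:ℝ)..T, H t‖ ≤ k₁ * ‖Z‖ + B1 * ρ + 6 * k₁ * k₂ * ‖A‖ := by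
    linarith [tri, hInormZ, hEB, hEC]
  have main : ‖A‖ ≤ k₁^2 * (k₁ * ‖Z‖ + B1 * ρ + 6 * k₁ * k₂ * ‖A‖) := by
    have h0 : 0 ≤ k₁ * k₁ := by positivity
    calc ‖A‖ ≤ k₁ * ‖∫ t in (0:ℝ)..T, H t‖ * k₁ := hAle
    _ = k₁^2 * ‖∫ t in (0:ℝ)..T, H t‖ := by ring
    _ ≤ k₁^2 * (k₁ * ‖Z‖ + B1 * ρ + 6 * k₁ * k₂ * ‖A‖) :=
        mul_le_mul_of_nonneg_left hIHle (by positivity)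
  have hk3 : (0:ℝ) < k₁^3 := by positivity
  have expand : (1 / k₁) * (1 / k₁ ^ 2 - 2 * k₁ ^ 2 * (Sd + SD) * ρ - 6 * k₁ * k₂) * ‖A‖
      = (‖A‖ - (k₁^2 * (B1 * ρ) + k₁^2 * (6 * k₁ * k₂ * ‖A‖))) / k₁^3 := by
    rw [hB1]; field_simp; ring
  rw [expand, div_le_iff₀ hk3]
  nlinarith [main]

theorem franks_key_lower_bound
    (T t₀ lam : ℝ) (hT : 0 < T) (ht₀ : t₀ ∈ Set.Ioo 0 T) (hlam : 0 < lam)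
    (hlam0 : 0 ≤ t₀ - lam) (hlamT : t₀ + lam ≤ T)
    (X : ℝ → (E2 ≃L[ℝ] E2))
    (hXcont : ContinuousOn (fun t => (X t : E2 →L[ℝ] E2)) (Set.Icc 0 T))
    (hXicont : ContinuousOn
      (fun t => (((X t)⁻¹ : E2 ≃L[ℝ] E2) : E2 →L[ℝ] E2)) (Set.Icc 0 T))
    (k₁ : ℝ) (hk₁ : 1 ≤ k₁)
    (hXnorm : ∀ t ∈ Set.Icc (0 : ℝ) T, ‖(X t : E2 →L[ℝ] E2)‖ ≤ k₁)
    (hXinorm : ∀ t ∈ Set.Icc (0 : ℝ) T,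
      ‖(((X t)⁻¹ : E2 ≃L[ℝ] E2) : E2 →L[ℝ] E2)‖ ≤ k₁)
    (k₂ : ℝ) (hk₂ : 0 < k₂)
    (hosc : ∀ t : ℝ, |t - t₀| ≤ lam →
      ‖(X t : E2 →L[ℝ] E2) - (X t₀ : E2 →L[ℝ] E2)‖ ≤ k₂)
    (hosci : ∀ t : ℝ, |t - t₀| ≤ lam →
      ‖(((X t)⁻¹ : E2 ≃L[ℝ] E2) : E2 →L[ℝ] E2) -
        (((X t₀)⁻¹ : E2 ≃L[ℝ] E2) : E2 →L[ℝ] E2)‖ ≤ k₂)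
    (δ Δ : ℝ → ℝ) (hδc : Continuous δ) (hΔc : Continuous Δ)
    (hδ0 : ∀ t, 0 ≤ δ t) (hΔ0 : ∀ t, 0 ≤ Δ t)
    (hδsupp : Function.support δ ⊆ Set.Icc (t₀ - lam) t₀)
    (hΔsupp : Function.support Δ ⊆ Set.Icc t₀ (t₀ + lam))
    (hδint : (∫ t : ℝ, δ t) = 1) (hΔint : (∫ t : ℝ, Δ t) = 1)
    (ρ : ℝ) (hρ : 0 < ρ)
    (α : ℝ → ℝ) (hαc : ContinuousOn α (Set.Icc 0 T))
    (hα01 : ∀ t ∈ Set.Icc (0 : ℝ) T, α t ∈ Set.Icc (0 : ℝ) 1)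
    (hαint : (∫ t in (0 : ℝ)..T, |α t - 1|) ≤ ρ)
    (a b c : ℝ)
    (A A₁ A₂ : E2 →L[ℝ] E2)
    (hA : A = Matrix.toEuclideanCLM (𝕜 := ℝ) !![b, c; a, -b])
    (hA₁ : A₁ = Matrix.toEuclideanCLM (𝕜 := ℝ) !![b, 0; a, -b])
    (hA₂ : A₂ = Matrix.toEuclideanCLM (𝕜 := ℝ) !![(0 : ℝ), c; 0, 0])
    (Z : E2 →L[ℝ] E2)
    (hZ : Z = (X T : E2 →L[ℝ] E2).comp
      (∫ t in (0 : ℝ)..T,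
        α t • (δ t • ((((X t)⁻¹ : E2 ≃L[ℝ] E2) : E2 →L[ℝ] E2).comp
              (A₁.comp (X t : E2 →L[ℝ] E2))) +
            Δ t • ((((X t)⁻¹ : E2 ≃L[ℝ] E2) : E2 →L[ℝ] E2).comp
              (A₂.comp (X t : E2 →L[ℝ] E2)))))) :
    (1 / k₁) * (1 / k₁ ^ 2 - 2 * k₁ ^ 2 * ((⨆ t : ℝ, δ t) + (⨆ t : ℝ, Δ t)) * ρ -
        6 * k₁ * k₂) * ‖A‖ ≤ ‖Z‖ := by
  have hA12 : A₁ + A₂ = A := by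
    rw [hA, hA₁, hA₂, ← map_add]
    congr 1
    ext i j
    fin_cases i <;> fin_cases j <;> simp
  have hA2n : ‖A₂‖ ≤ ‖A‖ := by
    rw [hA, hA₂]
    exact le_trans (franks_A2_norm_le c) (franks_c_le_A_norm a b c)
  have hA1n : ‖A₁‖ ≤ 2 * ‖A‖ := by
    have : A₁ = A - A₂ := by rw [← hA12]; abel
    rw [this]
    calc ‖A - A₂‖ ≤ ‖A‖ + ‖A₂‖ := norm_sub_le _ _
    _ ≤ 2 * ‖A‖ := by linarith
  have hidT : ((((X T)⁻¹ : E2 ≃L[ℝ] E2) : E2 →L[ℝ] E2)).comp (X T : E2 →L[ℝ] E2)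
      = ContinuousLinearMap.id ℝ E2 :=
    ContinuousLinearMap.ext fun x => (X T).symm_apply_apply x
  have hid0 : (X t₀ : E2 →L[ℝ] E2).comp ((((X t₀)⁻¹ : E2 ≃L[ℝ] E2) : E2 →L[ℝ] E2))
      = ContinuousLinearMap.id ℝ E2 :=
    ContinuousLinearMap.ext fun x => (X t₀).apply_symm_apply x
  exact franks_aux T t₀ lam hT ht₀ hlam hlam0 hlamT
    (fun t => (X t : E2 →L[ℝ] E2))
    (fun t => (((X t)⁻¹ : E2 ≃L[ℝ] E2) : E2 →L[ℝ] E2))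
    hXcont hXicont k₁ hk₁ hXnorm hXinorm k₂ hk₂ hosc hosci hidT hid0
    δ Δ hδc hΔc hδ0 hΔ0 hδsupp hΔsupp hδint hΔint ρ hρ α hαc hαint
    A A₁ A₂ hA12 hA1n hA2n Z hZ

end
end

section
/- Let n ≥ 1, let F : ℝⁿ → ℝⁿ be a continuously differentiable map (with ℝⁿ carrying the Euclidean norm), and let a > 0 and r > 0 be such that ‖dF_x(v)‖ ≥ a ‖v‖ for every x with ‖x‖ ≤ r and every v ∈ ℝⁿ. Then for every b with 0 < b < a·r, every point p with ‖p − F(0)‖ < b belongs to the image under F of the closed ball { x ∈ ℝⁿ : ‖x‖ ≤ b/a }; that is, { p : ‖p − F(0)‖ < b } ⊆ F( { x : ‖x‖ ≤ b/a } ). -/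
/-!
Continuous induction along the segment from `F 0` to `p`: the set of times `t ∈ [0, 1]` at which
`F 0 + t • (p - F 0)` has a preimage within `t · b / a` of `0` is closed by compactness, and it
can be pushed past each of its points `t < 1` because near a point where the derivative is
surjective with `‖dF v‖ ≥ a ‖v‖`, the image of a ball of small radius `δ` contains the ball of
radius `c δ` about the image point, for any `c < a`.
-/

noncomputable section

abbrev Euc (n : ℕ) := EuclideanSpace ℝ (Fin n)

open Set Metric Function

variable {E G : Type*} [NormedAddCommGroup E] [NormedSpace ℝ E]
  [NormedAddCommGroup G] [NormedSpace ℝ G]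

namespace ContinuousLinearMap

def nonlinearRightInverseOfLeNorm (L : E →L[ℝ] G) (hL : Surjective L) {a : ℝ} (ha : 0 < a)
    (hbd : ∀ v, a * ‖v‖ ≤ ‖L v‖) : L.NonlinearRightInverse where
  toFun := surjInv hL
  nnnorm := a.toNNReal⁻¹
  bound' y := by
    have h := hbd (surjInv hL y)
    rw [surjInv_eq hL] at h
    rw [NNReal.coe_inv, Real.coe_toNNReal a ha.le, inv_mul_eq_div, le_div_iff₀' ha]
    exact h
  right_inv' := surjInv_eq hL

theorem surjective_of_mul_norm_le [FiniteDimensional ℝ E] (L : E →L[ℝ] E) {a : ℝ} (ha : 0 < a)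
    (hbd : ∀ v, a * ‖v‖ ≤ ‖L v‖) : Surjective L := by
  refine LinearMap.injective_iff_surjective.mp fun u v huv => sub_eq_zero.mp ?_
  have h := hbd (u - v)
  rw [map_sub, show L u - L v = 0 from sub_eq_zero.mpr huv, norm_zero] at h
  exact norm_le_zero_iff.mp (nonpos_of_mul_nonpos_right h ha)

end ContinuousLinearMap

theorem HasStrictFDerivAt.closedBall_subset_image_closedBall [CompleteSpace E] {f : E → G}
    {L : E →L[ℝ] G} {x : E} (hf : HasStrictFDerivAt f L x) (hL : Surjective L) {a c : ℝ}
    (ha : 0 < a) (hbd : ∀ v, a * ‖v‖ ≤ ‖L v‖) (hca : c < a) :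
    ∃ δ₀ > 0, ∀ δ, 0 ≤ δ → δ ≤ δ₀ → closedBall (f x) (c * δ) ⊆ f '' closedBall x δ := by
  obtain ⟨s, hs, hfs⟩ := hf.approximates_deriv_on_nhds (c := (a - c).toNNReal)
    (Or.inr (Real.toNNReal_pos.2 (sub_pos.2 hca)))
  obtain ⟨δ₀, hδ₀, hδ₀s⟩ := nhds_basis_closedBall.mem_iff.mp hs
  refine ⟨δ₀, hδ₀, fun δ hδ hδδ₀ => ?_⟩
  have hsurj := (hfs.mono_set ((closedBall_subset_closedBall hδδ₀).trans hδ₀s)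
    ).surjOn_closedBall_of_nonlinearRightInverse
    (L.nonlinearRightInverseOfLeNorm hL ha hbd) hδ subset_rfl
  have hradius : ((a.toNNReal⁻¹ : NNReal) : ℝ)⁻¹ - (a - c).toNNReal = c := by
    rw [NNReal.coe_inv, inv_inv, Real.coe_toNNReal a ha.le, Real.coe_toNNReal _ (sub_pos.2 hca).le]
    ring
  rwa [ContinuousLinearMap.nonlinearRightInverseOfLeNorm, hradius] at hsurj

def liftableTimes {X : Type*} [PseudoMetricSpace X] (f : X → G) (z : X) (p : G) (ρ : ℝ) :
    Set ℝ :=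
  {t | ∃ x ∈ closedBall z (t * ρ), f x = AffineMap.lineMap (f z) p t}

theorem isClosed_liftableTimes_inter_Icc {X : Type*} [PseudoMetricSpace X] [ProperSpace X]
    {f : X → G} (hf : Continuous f) (z : X) (p : G) {ρ : ℝ} (hρ : 0 ≤ ρ) :
    IsClosed (liftableTimes f z p ρ ∩ Icc 0 1) := by
  set K : Set (ℝ × X) := {q | q.1 ∈ Icc 0 1 ∧ q.2 ∈ closedBall z (q.1 * ρ) ∧
    f q.2 = AffineMap.lineMap (f z) p q.1}
  have hK : IsClosed K :=
    (isClosed_Icc.preimage continuous_fst).inter <|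
      (isClosed_le (continuous_snd.dist continuous_const)
        (continuous_fst.mul continuous_const)).inter
      (isClosed_eq (hf.comp continuous_snd) (AffineMap.lineMap_continuous.comp continuous_fst))
  have hKsub : K ⊆ Icc 0 1 ×ˢ closedBall z ρ := fun q ⟨ht, hx, _⟩ =>
    ⟨ht, closedBall_subset_closedBall (mul_le_of_le_one_left hρ ht.2) hx⟩
  have hfst : Prod.fst '' K = liftableTimes f z p ρ ∩ Icc 0 1 := by
    ext t
    constructor
    · rintro ⟨⟨t, x⟩, ⟨ht, hx, hfx⟩, rfl⟩
      exact ⟨⟨x, hx, hfx⟩, ht⟩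
    · rintro ⟨⟨x, hx, hfx⟩, ht⟩
      exact ⟨(t, x), ⟨ht, hx, hfx⟩, rfl⟩
  rw [← hfst]
  exact ((isCompact_Icc.prod (isCompact_closedBall z ρ)).of_isClosed_subset hK hKsub
    |>.image continuous_fst).isClosed

theorem liftableTimes_inter_Ioc_nonempty [CompleteSpace E] {f : E → G} (hf : ContDiff ℝ 1 f)
    {z : E} {p : G} {a ρ : ℝ} (ha : 0 < a) (hρ : 0 < ρ)
    (hsurj : ∀ x ∈ closedBall z ρ, Surjective (fderiv ℝ f x))
    (hbd : ∀ x ∈ closedBall z ρ, ∀ v, a * ‖v‖ ≤ ‖fderiv ℝ f x v‖) (hp : dist p (f z) < a * ρ)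
    {t : ℝ} (ht : t ∈ liftableTimes f z p ρ ∩ Ico 0 1) {y : ℝ} (hty : t < y) :
    (liftableTimes f z p ρ ∩ Ioc t y).Nonempty := by
  obtain ⟨⟨x, hx, hfx⟩, -, ht₁⟩ := ht
  have hxρ : x ∈ closedBall z ρ :=
    closedBall_subset_closedBall (mul_le_of_le_one_left hρ.le ht₁.le) hx
  set c := dist p (f z)
  have hca : c / ρ < a := (div_lt_iff₀ hρ).mpr hp
  obtain ⟨δ₀, hδ₀, hball⟩ := (hf.contDiffAt.hasStrictFDerivAt one_ne_zero
    ).closedBall_subset_image_closedBall (hsurj x hxρ) ha (hbd x hxρ) hca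
  set δ := min δ₀ ((y - t) * ρ)
  have hδ : 0 < δ := lt_min hδ₀ (mul_pos (sub_pos.2 hty) hρ)
  -- advancing time by `δ / ρ` moves the target by `(c / ρ) δ`, within reach since `c / ρ < a`
  set s := t + δ / ρ
  have hsy : δ / ρ ≤ y - t := (div_le_iff₀ hρ).mpr (min_le_right _ _)
  have htarget : AffineMap.lineMap (f z) p s ∈ closedBall (f x) (c / ρ * δ) := by
    rw [mem_closedBall, hfx, dist_lineMap_lineMap, dist_comm (f z) p, Real.dist_eq,
      show s - t = δ / ρ by ring, abs_of_pos (div_pos hδ hρ), div_mul_comm, mul_comm]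
  obtain ⟨x', hx', hfx'⟩ := hball δ hδ.le (min_le_left _ _) htarget
  refine ⟨s, ⟨x', ?_, hfx'⟩, lt_add_of_pos_right t (div_pos hδ hρ), by linarith⟩
  calc dist x' z ≤ dist x' x + dist x z := dist_triangle _ _ _
    _ ≤ δ + t * ρ := add_le_add (mem_closedBall.mp hx') (mem_closedBall.mp hx)
    _ = s * ρ := by simp only [s]; field_simp; ring

theorem ball_subset_image_closedBall_of_mul_norm_le_fderiv [ProperSpace E] {f : E → G}
    (hf : ContDiff ℝ 1 f) {z : E} {a ρ : ℝ} (ha : 0 < a) (hρ : 0 < ρ)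
    (hsurj : ∀ x ∈ closedBall z ρ, Surjective (fderiv ℝ f x))
    (hbd : ∀ x ∈ closedBall z ρ, ∀ v, a * ‖v‖ ≤ ‖fderiv ℝ f x v‖) :
    ball (f z) (a * ρ) ⊆ f '' closedBall z ρ := by
  intro p hp
  have h₀ : (0 : ℝ) ∈ liftableTimes f z p ρ := ⟨z, by simp, by simp⟩
  obtain ⟨x, hx, hfx⟩ : (1 : ℝ) ∈ liftableTimes f z p ρ :=
    (isClosed_liftableTimes_inter_Icc hf.continuous z p hρ.le).Icc_subset_of_forall_exists_gt h₀
      (fun t ht y hty => liftableTimes_inter_Ioc_nonempty hf ha hρ hsurj hbd hp ht hty)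
      ⟨zero_le_one, le_rfl⟩
  exact ⟨x, by simpa using hx, by simpa using hfx⟩

theorem quantitative_open_image_general {n : ℕ}
    (F : Euc n → Euc n) (hF : ContDiff ℝ 1 F)
    (a r : ℝ) (ha : 0 < a)
    (hd : ∀ x : Euc n, ‖x‖ ≤ r → ∀ v : Euc n, a * ‖v‖ ≤ ‖fderiv ℝ F x v‖) :
    ∀ b : ℝ, 0 < b → b < a * r →
      Metric.ball (F 0) b ⊆ F '' Metric.closedBall 0 (b / a) := by
  intro b hb hbr
  have hbd : ∀ x ∈ closedBall (0 : Euc n) (b / a), ∀ v, a * ‖v‖ ≤ ‖fderiv ℝ F x v‖ :=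
    fun x hx => hd x ((mem_closedBall_zero_iff.mp hx).trans ((div_le_iff₀' ha).mpr hbr.le))
  have h := ball_subset_image_closedBall_of_mul_norm_le_fderiv hF ha (div_pos hb ha)
    (fun x hx => (fderiv ℝ F x).surjective_of_mul_norm_le ha (hbd x hx)) hbd
  rwa [mul_div_cancel₀ b ha.ne'] at h

theorem quantitative_open_image {n : ℕ} (hn : 1 ≤ n)
    (F : Euc n → Euc n) (hF : ContDiff ℝ 1 F)
    (a r : ℝ) (ha : 0 < a) (hr : 0 < r)
    (hd : ∀ x : Euc n, ‖x‖ ≤ r → ∀ v : Euc n, a * ‖v‖ ≤ ‖fderiv ℝ F x v‖) :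
    ∀ b : ℝ, 0 < b → b < a * r →
      Metric.ball (F 0) b ⊆ F '' Metric.closedBall 0 (b / a) :=
  quantitative_open_image_general F hF a r ha hd
end
end

section
/- Let E be a finite-dimensional real inner product space, and let β : E → ℝ be a convex and superlinear function, i.e. β((1−t)x + ty) ≤ (1−t)β(x) + tβ(y) for all x,y ∈ E and t ∈ [0,1], and for every M > 0 there is R > 0 such that β(h) ≥ M‖h‖ whenever ‖h‖ ≥ R. Define its conjugate α : E → ℝ by α(ω) = sup_{h ∈ E} ( ⟨ω, h⟩ − β(h) ) (a finite real number, by superlinearity of β). Then for every h₀ ∈ E with h₀ ≠ 0 and every real number c with c ≥ −β(0), there exist λ₀ ∈ ℝ and ω₀ ∈ E such that ω₀ is a subgradient of β at the point λ₀h₀, i.e. β(h) ≥ β(λ₀h₀) + ⟨ω₀, h − λ₀h₀⟩ for all h ∈ E, and α(ω₀) = c. -/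
/-!
Lemma A.1 (convex-analytic content): for a convex superlinear function `β` on a
finite-dimensional inner product space and any `h₀ ≠ 0`, every value `c ≥ −β(0)`
of the conjugate function `α(ω) = sup_h (⟨ω,h⟩ − β(h))` is attained at a
subgradient `ω₀` of `β` at some point `λ₀h₀` of the line `ℝh₀`.
-/

open RealInnerProductSpace

theorem subgradient_on_line_with_prescribed_conjugate_value
    {E : Type*} [NormedAddCommGroup E] [InnerProductSpace ℝ E]
    [FiniteDimensional ℝ E]
    (β : E → ℝ) (hconv : ConvexOn ℝ Set.univ β)
    (hsuper : ∀ M : ℝ, 0 < M → ∃ R : ℝ, 0 < R ∧ ∀ h : E, R ≤ ‖h‖ → M * ‖h‖ ≤ β h)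
    (h₀ : E) (hh₀ : h₀ ≠ 0) (c : ℝ) (hc : -β 0 ≤ c) :
    ∃ (l₀ : ℝ) (ω₀ : E),
      (∀ h : E, β (l₀ • h₀) + ⟪ω₀, h - l₀ • h₀⟫ ≤ β h) ∧
      (⨆ h : E, (⟪ω₀, h⟫ - β h)) = c := by
  have hβc : Continuous β := hconv.locallyLipschitz.continuous
  -- the restriction of β to the line ℝ h₀
  set g : ℝ → ℝ := fun t => β (t • h₀) with hg
  have hgconv : ConvexOn ℝ Set.univ g := by
    refine ⟨convex_univ, fun x _ y _ a b ha hb hab => ?_⟩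
    have := hconv.2 (Set.mem_univ (x • h₀)) (Set.mem_univ (y • h₀)) ha hb hab
    simpa [hg, add_smul, smul_smul] using this
  have hgcont : Continuous g := hβc.comp (continuous_id.smul continuous_const)
  have hnorm : (0:ℝ) < ‖h₀‖ := norm_pos_iff.2 hh₀
  -- coercivity of t ↦ s t − g t
  have hcoer : ∀ s : ℝ, ∃ r : ℝ, 0 < r ∧ ∀ t : ℝ, r ≤ |t| → s * t - g t ≤ -|t| := by
    intro s
    obtain ⟨R, hR, hRb⟩ := hsuper ((|s| + 1) / ‖h₀‖) (by positivity)
    refine ⟨R / ‖h₀‖, by positivity, fun t ht => ?_⟩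
    have h1 : R ≤ ‖t • h₀‖ := by
      rw [norm_smul, Real.norm_eq_abs]
      calc R = (R / ‖h₀‖) * ‖h₀‖ := by field_simp
        _ ≤ |t| * ‖h₀‖ := by gcongr
    have h2 := hRb _ h1
    rw [norm_smul, Real.norm_eq_abs] at h2
    have h3 : (|s| + 1) * |t| ≤ g t := by
      have heq : (|s| + 1) / ‖h₀‖ * (|t| * ‖h₀‖) = (|s| + 1) * |t| := by
        field_simp
      rw [heq] at h2
      exact h2
    have h4 : s * t ≤ |s| * |t| := (le_abs_self _).trans (abs_mul s t).le
    nlinarith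
  -- existence of a maximizer of t ↦ s t − g t
  have hmax : ∀ s : ℝ, ∃ t₀ : ℝ, ∀ t : ℝ, s * t - g t ≤ s * t₀ - g t₀ := by
    intro s
    obtain ⟨r, hr, hrb⟩ := hcoer s
    set r' : ℝ := max r (max (g 0) 1) with hr'
    have hr'r : r ≤ r' := le_max_left _ _
    have hr'g : g 0 ≤ r' := le_trans (le_max_left _ _) (le_max_right _ _)
    have hr'1 : (1:ℝ) ≤ r' := le_trans (le_max_right _ _) (le_max_right _ _)
    have hne : (Set.Icc (-r') r').Nonempty := ⟨0, by constructor <;> linarith⟩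
    have hcont : ContinuousOn (fun t => s * t - g t) (Set.Icc (-r') r') :=
      ((continuous_const.mul continuous_id).sub hgcont).continuousOn
    obtain ⟨t₀, ht₀m, ht₀⟩ := isCompact_Icc.exists_isMaxOn hne hcont
    refine ⟨t₀, fun t => ?_⟩
    by_cases ht : t ∈ Set.Icc (-r') r'
    · exact ht₀ ht
    · have habs : r' < |t| := by
        simp only [Set.mem_Icc, not_and, not_le] at ht
        rcases le_or_gt (-r') t with h | h
        · exact lt_of_lt_of_le (ht h) (le_abs_self t)
        · calc r' < -t := by linarith
            _ ≤ |t| := neg_le_abs t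
      have h1 : s * t - g t ≤ -|t| := hrb t (by linarith)
      have h2 : s * 0 - g 0 ≤ s * t₀ - g t₀ := ht₀ ⟨by linarith, by linarith⟩
      have h3 : s * 0 - g 0 = -g 0 := by ring
      linarith
  have hbdd : ∀ s : ℝ, BddAbove (Set.range fun t => s * t - g t) := by
    intro s
    obtain ⟨t₀, h⟩ := hmax s
    exact ⟨s * t₀ - g t₀, Set.forall_mem_range.2 h⟩
  -- the conjugate of g
  set G : ℝ → ℝ := fun s => ⨆ t : ℝ, (s * t - g t) with hG
  have hGle : ∀ s t : ℝ, s * t - g t ≤ G s := fun s t => le_ciSup (hbdd s) t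
  have hGeq : ∀ s t₀ : ℝ, (∀ t, s * t - g t ≤ s * t₀ - g t₀) → G s = s * t₀ - g t₀ :=
    fun s t₀ h => le_antisymm (ciSup_le h) (hGle s t₀)
  have hGconv : ConvexOn ℝ Set.univ G := by
    refine ⟨convex_univ, fun x _ y _ a b ha hb hab => ?_⟩
    simp only [smul_eq_mul, hG]
    refine ciSup_le fun t => ?_
    have h1 : a * (x * t - g t) ≤ a * G x := mul_le_mul_of_nonneg_left (hGle x t) ha
    have h2 : b * (y * t - g t) ≤ b * G y := mul_le_mul_of_nonneg_left (hGle y t) hb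
    have h3 : (a * x + b * y) * t - g t = a * (x * t - g t) + b * (y * t - g t) := by
      linear_combination g t * hab
    linarith
  have hGcont : Continuous G := hGconv.locallyLipschitz.continuous
  -- a subgradient slope of g at 0
  have hBslope : BddBelow (Set.range fun μ : {μ : ℝ // 0 < μ} => (g μ.1 - g 0) / μ.1) := by
    refine ⟨g 0 - g (-1), Set.forall_mem_range.2 fun μ => ?_⟩
    have := hgconv.slope_mono_adjacent (Set.mem_univ (-1:ℝ)) (Set.mem_univ μ.1)
      (by norm_num) μ.2
    simpa using this
  set A : ℝ := ⨅ μ : {μ : ℝ // 0 < μ}, (g μ.1 - g 0) / μ.1 with hA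
  have hAsub : ∀ t : ℝ, g 0 + A * t ≤ g t := by
    intro t
    rcases lt_trichotomy t 0 with h | h | h
    · have hle : (g 0 - g t) / (0 - t) ≤ A := by
        refine le_ciInf fun μ => ?_
        have := hgconv.slope_mono_adjacent (Set.mem_univ t) (Set.mem_univ μ.1) h μ.2
        simpa using this
      have h2 : g 0 - g t ≤ A * (0 - t) := by
        rw [div_le_iff₀ (by linarith)] at hle
        linarith
      nlinarith
    · simp [h]
    · have hle : A ≤ (g t - g 0) / t := ciInf_le hBslope ⟨t, h⟩
      have h2 : A * t ≤ g t - g 0 := by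
        rw [le_div_iff₀ h] at hle
        linarith
      linarith
  have hGA : G A ≤ c := by
    refine le_trans (ciSup_le fun t => ?_) hc
    have h1 := hAsub t
    have hg0 : g 0 = β 0 := by simp [hg]
    linarith
  set s₁ : ℝ := c + g 1 with hs₁
  have hGs₁ : c ≤ G s₁ := by
    have := hGle s₁ 1
    have h1 : s₁ * 1 - g 1 = c := by rw [hs₁]; ring
    linarith
  -- intermediate value: find s₀ with G s₀ = c
  have hmem : c ∈ Set.uIcc (G A) (G s₁) := Set.mem_uIcc.2 (Or.inl ⟨hGA, hGs₁⟩)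
  obtain ⟨s₀, -, hGs₀⟩ := intermediate_value_uIcc hGcont.continuousOn hmem
  obtain ⟨l₀, hl₀⟩ := hmax s₀
  have hval : s₀ * l₀ - g l₀ = c := by rw [← hGeq s₀ l₀ hl₀]; exact hGs₀
  have hub : ∀ t : ℝ, s₀ * t - g t ≤ c := fun t => hval ▸ hl₀ t
  -- set up Hahn–Banach separation in E × ℝ
  set x₀ : E := l₀ • h₀ with hx₀
  set p : E → ℝ := fun h => β (x₀ + h) - β x₀ with hp
  have hpcont : Continuous p := (hβc.comp (continuous_const.add continuous_id)).sub
    continuous_const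
  have hpconv : ConvexOn ℝ Set.univ p := by
    refine ⟨convex_univ, fun x _ y _ a b ha hb hab => ?_⟩
    have key := hconv.2 (Set.mem_univ (x₀ + x)) (Set.mem_univ (x₀ + y)) ha hb hab
    rw [show a • (x₀ + x) + b • (x₀ + y) = x₀ + (a • x + b • y) by
      rw [smul_add, smul_add, ← add_assoc, add_assoc (a • x₀), add_comm (a • x),
        ← add_assoc, ← add_smul, hab, one_smul]; abel] at key
    simp only [hp, smul_eq_mul] at key ⊢
    have hsum : a * β x₀ + b * β x₀ = β x₀ := by rw [← add_mul, hab, one_mul]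
    linarith
  have hline : ∀ t : ℝ, s₀ * t ≤ p (t • h₀) := by
    intro t
    have h1 := hub (l₀ + t)
    have h2 : p (t • h₀) = g (l₀ + t) - g l₀ := by
      simp only [hp, hx₀, hg, ← add_smul]
    rw [h2, mul_add] at *
    linarith
  set Aset : Set (E × ℝ) := {z | p z.1 < z.2} with hAset
  have hAopen : IsOpen Aset := by
    have heq : Aset = (fun z : E × ℝ => p z.1 - z.2) ⁻¹' (Set.Iio 0) := by
      ext z
      simp [hAset, sub_neg]
    rw [heq]
    exact ((hpcont.comp continuous_fst).sub continuous_snd).isOpen_preimage _ isOpen_Iio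
  have hAconv : Convex ℝ Aset := by
    intro z hz w hw a b ha hb hab
    simp only [hAset, Set.mem_setOf_eq] at hz hw ⊢
    have hkey := hpconv.2 (Set.mem_univ z.1) (Set.mem_univ w.1) ha hb hab
    simp only [smul_eq_mul] at hkey
    have hfst : (a • z + b • w).1 = a • z.1 + b • w.1 := rfl
    have hsnd : (a • z + b • w).2 = a * z.2 + b * w.2 := rfl
    rw [hfst, hsnd]
    rcases eq_or_lt_of_le ha with ha0 | ha0
    · have hb1 : b = 1 := by linarith
      have h1 : p (a • z.1 + b • w.1) ≤ a * p z.1 + b * p w.1 := hkey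
      rw [← ha0, hb1] at h1 ⊢
      simp only [zero_mul, one_mul, zero_add] at h1 ⊢
      linarith
    · have h1 : a * p z.1 < a * z.2 := mul_lt_mul_of_pos_left hz ha0
      have h2 : b * p w.1 ≤ b * w.2 := mul_le_mul_of_nonneg_left hw.le hb
      linarith [hkey]
  set L : Set (E × ℝ) := Set.range (fun t : ℝ => ((t • h₀ : E), s₀ * t)) with hL
  have hLconv : Convex ℝ L := by
    rintro _ ⟨t1, rfl⟩ _ ⟨t2, rfl⟩ a b ha hb hab
    refine ⟨a * t1 + b * t2, ?_⟩
    ext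
    · simp [add_smul, smul_smul]
    · simp [smul_eq_mul]; ring
  have hdisj : Disjoint Aset L := by
    rw [Set.disjoint_left]
    rintro z hz ⟨t, rfl⟩
    simp only [hAset, Set.mem_setOf_eq] at hz
    exact absurd (hline t) (not_le.2 hz)
  obtain ⟨f, u, hfA, hfL⟩ := geometric_hahn_banach_open hAconv hAopen hLconv hdisj
  have hf00 : f ((0:E), (0:ℝ)) = 0 := by
    have : ((0:E), (0:ℝ)) = (0 : E × ℝ) := rfl
    rw [this, map_zero]
  set r : ℝ := f (0, 1) with hr
  have hsplit : ∀ (h : E) (y : ℝ), f (h, y) = f (h, 0) + y * r := by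
    intro h y
    have heq : ((h, y) : E × ℝ) = (h, (0:ℝ)) + y • ((0:E), (1:ℝ)) := by
      ext <;> simp
    rw [heq, map_add, map_smul, smul_eq_mul, hr]
  have hεr : ∀ ε : ℝ, 0 < ε → ε * r < u := by
    intro ε hε
    have hmem : ((0:E), ε) ∈ Aset := by
      simp only [hAset, Set.mem_setOf_eq, hp]
      rw [add_zero, sub_self]
      exact hε
    have := hfA _ hmem
    rwa [hsplit, hf00, zero_add] at this
  have hu0 : u ≤ 0 := by
    have hmem : ((0:E), (0:ℝ)) ∈ L := ⟨0, by simp⟩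
    have := hfL _ hmem
    rwa [hf00] at this
  have hrneg : r < 0 := by
    rcases lt_or_ge r 0 with h | h
    · exact h
    · have := hεr 1 one_pos
      linarith
  have hr0 : r ≠ 0 := hrneg.ne
  have hu0' : 0 ≤ u := by
    by_contra hneg
    push_neg at hneg
    have hεpos : 0 < u / (2 * r) := div_pos_of_neg_of_neg hneg (by linarith)
    have := hεr _ hεpos
    have heq : u / (2 * r) * r = u / 2 := by
      rw [div_mul_eq_mul_div, mul_comm 2 r, ← div_div, mul_div_assoc,
        div_self hr0, mul_one]
    rw [heq] at this
    linarith
  have huz : u = 0 := le_antisymm hu0 hu0'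
  have hAineq : ∀ h : E, f (h, 0) + p h * r ≤ 0 := by
    intro h
    by_contra hcon
    push_neg at hcon
    set X : ℝ := f (h, 0) + p h * r with hX
    have hε : (0:ℝ) < X / (-r) := div_pos hcon (by linarith)
    have hmem : ((h : E), p h + X / (-r)) ∈ Aset := by
      simp only [hAset, Set.mem_setOf_eq]
      linarith
    have hlt := hfA _ hmem
    rw [hsplit, huz] at hlt
    have hexp : (p h + X / (-r)) * r = p h * r - X := by
      rw [div_neg, add_mul, neg_mul, div_mul_cancel₀ _ hr0]
      ring
    rw [hexp] at hlt
    rw [hX] at hlt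
    linarith
  have hLineq : ∀ t : ℝ, 0 ≤ f (t • h₀, 0) + s₀ * t * r := by
    intro t
    have := hfL _ ⟨t, rfl⟩
    rw [hsplit, huz] at this
    linarith
  -- define ω₀ via the Riesz representation
  have hrne : (-r) ≠ 0 := by linarith
  set φ : E →L[ℝ] ℝ := ((-r)⁻¹ • f.comp (ContinuousLinearMap.inl ℝ E ℝ)) with hφ
  set ω₀ : E := (InnerProductSpace.toDual ℝ E).symm φ with hω
  have hωeq : ∀ h : E, ⟪ω₀, h⟫ = (-r)⁻¹ * f (h, 0) := by
    intro h
    rw [hω, InnerProductSpace.toDual_symm_apply]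
    simp [hφ]
  have hρ : (0:ℝ) < (-r)⁻¹ := inv_pos.2 (by linarith)
  have hsub : ∀ h : E, ⟪ω₀, h⟫ ≤ p h := by
    intro h
    rw [hωeq]
    have h1 : f (h, 0) ≤ p h * (-r) := by
      have := hAineq h
      nlinarith
    have h2 : (-r)⁻¹ * f (h, 0) ≤ (-r)⁻¹ * (p h * (-r)) := mul_le_mul_of_nonneg_left h1 hρ.le
    have h3 : (-r)⁻¹ * (p h * (-r)) = p h := by
      rw [mul_comm, mul_assoc, mul_inv_cancel₀ hrne, mul_one]
    linarith
  have hω₀h₀ : ∀ t : ℝ, s₀ * t ≤ ⟪ω₀, t • h₀⟫ := by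
    intro t
    rw [hωeq]
    have h1 : s₀ * t * (-r) ≤ f (t • h₀, 0) := by
      have := hLineq t
      nlinarith
    have h2 : (-r)⁻¹ * (s₀ * t * (-r)) ≤ (-r)⁻¹ * f (t • h₀, 0) :=
      mul_le_mul_of_nonneg_left h1 hρ.le
    have h3 : (-r)⁻¹ * (s₀ * t * (-r)) = s₀ * t := by
      rw [mul_comm, mul_assoc, mul_inv_cancel₀ hrne, mul_one]
    linarith
  have hinner : ∀ t : ℝ, ⟪ω₀, t • h₀⟫ = s₀ * t := by
    intro t
    have h1 := hω₀h₀ t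
    have h2 := hω₀h₀ (-t)
    rw [neg_smul, inner_neg_right, mul_neg] at h2
    linarith
  have hpe : ∀ h : E, p (h - x₀) = β h - β x₀ := by
    intro h
    simp [hp]
  refine ⟨l₀, ω₀, ?_, ?_⟩
  · intro h
    have h1 := hsub (h - x₀)
    rw [hpe] at h1
    rw [← hx₀]
    linarith
  · have hbound : ∀ h : E, ⟪ω₀, h⟫ - β h ≤ c := by
      intro h
      have h1 := hsub (h - x₀)
      rw [hpe, inner_sub_right] at h1
      have h2 : ⟪ω₀, x₀⟫ = s₀ * l₀ := hinner l₀
      have h3 : g l₀ = β x₀ := rfl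
      linarith
    have hattain : ⟪ω₀, x₀⟫ - β x₀ = c := by
      have h2 : ⟪ω₀, x₀⟫ = s₀ * l₀ := hinner l₀
      have h3 : g l₀ = β x₀ := rfl
      linarith
    refine le_antisymm (ciSup_le hbound) ?_
    calc c = ⟪ω₀, x₀⟫ - β x₀ := hattain.symm
      _ ≤ ⨆ h : E, (⟪ω₀, h⟫ - β h) :=
        le_ciSup ⟨c, Set.forall_mem_range.2 hbound⟩ x₀
end

section
/- Let E be a finite-dimensional real inner product space, and let β : E → ℝ be a convex and superlinear function (for every M > 0 there is R > 0 such that β(h) ≥ M‖h‖ whenever ‖h‖ ≥ R). Then for every h₀ ∈ E with h₀ ≠ 0, the set S(h₀) = ⋃_{λ ∈ ℝ} ∂β(λh₀) of all subgradients of β at points of the line ℝh₀ is unbounded: for every R > 0 there exist λ ∈ ℝ and ω ∈ ∂β(λh₀) with ‖ω‖ > R. -/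
open RealInnerProductSpace

/-- Existence of a subgradient for a convex function on a finite-dimensional
real inner product space. -/
lemma exists_subgradient_aux
    {E : Type*} [NormedAddCommGroup E] [InnerProductSpace ℝ E]
    [FiniteDimensional ℝ E]
    (β : E → ℝ) (hconv : ConvexOn ℝ Set.univ β) (x : E) :
    ∃ ω : E, ∀ h : E, β x + ⟪ω, h - x⟫ ≤ β h := by
  have hβcont : Continuous β := by
    have h := hconv.continuousOn isOpen_univ
    exact continuousOn_univ.mp h
  set S : Set (E × ℝ) := {p : E × ℝ | β p.1 < p.2} with hS
  have hSopen : IsOpen S := isOpen_lt (hβcont.comp continuous_fst) continuous_snd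
  have hSconv : Convex ℝ S := by
    rintro p hp q hq a b ha hb hab
    simp only [hS, Set.mem_setOf_eq] at hp hq ⊢
    have h1 : β (a • p.1 + b • q.1) ≤ a * β p.1 + b * β q.1 :=
      hconv.2 (Set.mem_univ _) (Set.mem_univ _) ha hb hab
    have h2 : a * β p.1 + b * β q.1 < a * p.2 + b * q.2 := by
      rcases eq_or_lt_of_le ha with h | h
      · have hb1 : b = 1 := by linarith
        simp [← h, hb1, hq]
      · have : a * β p.1 < a * p.2 := by nlinarith
        have : b * β q.1 ≤ b * q.2 := by nlinarith [hq.le]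
        linarith
    simpa using lt_of_le_of_lt h1 h2
  have hxS : (x, β x) ∉ S := by simp [hS]
  obtain ⟨f, hf⟩ := geometric_hahn_banach_open_point hSconv hSopen hxS
  set g : E →L[ℝ] ℝ := f.comp (ContinuousLinearMap.inl ℝ E ℝ) with hg
  set c : ℝ := f (0, 1) with hc
  have hsplit : ∀ (h : E) (t : ℝ), f (h, t) = g h + t * c := by
    intro h t
    have : (h, t) = (h, (0:ℝ)) + t • ((0:E), (1:ℝ)) := by simp [Prod.ext_iff]
    rw [this, map_add, map_smul]
    simp [hg, hc, smul_eq_mul]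
  have hcneg : c < 0 := by
    have h1 := hf (x, β x + 1) (by simp [hS])
    rw [hsplit, hsplit] at h1
    nlinarith
  have key : ∀ h : E, g h + β h * c ≤ g x + β x * c := by
    intro h
    by_contra hcon
    push_neg at hcon
    set δ := (g h + β h * c) - (g x + β x * c) with hδ
    have hδpos : 0 < δ := by linarith
    have hcpos : (0:ℝ) < -c := by linarith
    have hεpos : 0 < δ / (2 * (-c)) := by positivity
    have hlt := hf (h, β h + δ / (2 * (-c))) (by simp only [hS, Set.mem_setOf_eq]; linarith)
    rw [hsplit, hsplit] at hlt
    have hcne : c ≠ 0 := hcneg.ne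
    have hc2 : δ / (2 * (-c)) * c = -(δ / 2) := by
      field_simp
    nlinarith
  have hcpos : (0:ℝ) < -c := by linarith
  refine ⟨(-c)⁻¹ • (InnerProductSpace.toDual ℝ E).symm g, fun h => ?_⟩
  have hip : ⟪(-c)⁻¹ • (InnerProductSpace.toDual ℝ E).symm g, h - x⟫ =
      (-c)⁻¹ * g (h - x) := by
    rw [real_inner_smul_left, InnerProductSpace.toDual_symm_apply]
  rw [hip, map_sub]
  have hkey := key h
  have : (-c)⁻¹ * (g h - g x) ≤ β h - β x := by
    rw [inv_mul_le_iff₀ hcpos]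
    nlinarith
  linarith

theorem subgradients_on_line_unbounded
    {E : Type*} [NormedAddCommGroup E] [InnerProductSpace ℝ E]
    [FiniteDimensional ℝ E]
    (β : E → ℝ) (hconv : ConvexOn ℝ Set.univ β)
    (hsuper : ∀ M : ℝ, 0 < M → ∃ R : ℝ, 0 < R ∧ ∀ h : E, R ≤ ‖h‖ → M * ‖h‖ ≤ β h)
    (h₀ : E) (hh₀ : h₀ ≠ 0) :
    ∀ R : ℝ, 0 < R → ∃ (l : ℝ) (ω : E),
      (∀ h : E, β (l • h₀) + ⟪ω, h - l • h₀⟫ ≤ β h) ∧ R < ‖ω‖ := by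
  intro R hR
  set M := R + 1 with hM
  obtain ⟨R₀, hR₀, hsup⟩ := hsuper M (by linarith)
  have hn : 0 < ‖h₀‖ := norm_pos_iff.mpr hh₀
  set l : ℝ := (R₀ + |β 0| + 1) / ‖h₀‖ with hl
  have hlpos : 0 < l := by positivity
  have hnorm : ‖l • h₀‖ = R₀ + |β 0| + 1 := by
    rw [norm_smul, Real.norm_eq_abs, abs_of_pos hlpos, hl]
    field_simp
  obtain ⟨ω, hω⟩ := exists_subgradient_aux β hconv (l • h₀)
  refine ⟨l, ω, hω, ?_⟩
  have h1 := hω 0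
  have h2 : M * ‖l • h₀‖ ≤ β (l • h₀) := hsup _ (by rw [hnorm]; linarith [abs_nonneg (β 0)])
  have h3 : ⟪ω, (0:E) - l • h₀⟫ = -⟪ω, l • h₀⟫ := by rw [zero_sub, inner_neg_right]
  have h4 : ⟪ω, l • h₀⟫ ≤ ‖ω‖ * ‖l • h₀‖ := real_inner_le_norm ω _
  -- β 0 ≥ β (l•h₀) - ⟪ω, l•h₀⟫ ≥ M‖l•h₀‖ - ‖ω‖‖l•h₀‖
  have h5 : M * ‖l • h₀‖ - ‖ω‖ * ‖l • h₀‖ ≤ β 0 := by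
    rw [h3] at h1; linarith
  have h6 : β 0 ≤ |β 0| := le_abs_self _
  have hnp : 0 < ‖l • h₀‖ := by rw [hnorm]; linarith [abs_nonneg (β 0)]
  -- M - ‖ω‖ ≤ β 0 / ‖l•h₀‖ < 1
  by_contra hcon
  push_neg at hcon
  have : M * ‖l • h₀‖ - R * ‖l • h₀‖ ≤ |β 0| := by nlinarith
  rw [hnorm] at this
  nlinarith [abs_nonneg (β 0)]
end
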